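/- arXiv:2402.11416 — 2 statements merged into one kernel-verified Lean document; each statement's English description precedes it below -/
import Mathlib

section
/- Let N be a smooth connected Riemannian manifold of dimension m and F : ℝᵐ → N a smooth map such that ‖d_x F(v)‖ ≥ a > 0 for all unit vectors v and all x with ‖x‖ ≤ r. Then for all 0 < b < a·r, the metric ball of radius b around F(0) in N is contained in the image under F of the Euclidean ball {x ∈ ℝᵐ : ‖x‖ < b/a}. -/
/-- Contreras, Prop. 7.3. Let `N` be a smooth connected Riemannian
manifold of dimension `m` (formalized, in the absence of Riemannian manifolds in Mathlib,
as a finite-dimensional real inner-product space of dimension `m`, which is connected)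
and `F : ℝᵐ → N` a smooth map with `‖d_x F(v)‖ ≥ a > 0` for all unit vectors `v` and all
`‖x‖ ≤ r`. Then for all `0 < b < a * r`, the ball of radius `b` about `F 0` is contained
in the image under `F` of `{x : ‖x‖ < b / a}`. -/
theorem franks_open_map_lemma (m : ℕ) (N : Type*)
    [NormedAddCommGroup N] [InnerProductSpace ℝ N] [FiniteDimensional ℝ N]
    (hdim : Module.finrank ℝ N = m) (hconn : ConnectedSpace N)
    (F : EuclideanSpace ℝ (Fin m) → N) (hF : ContDiff ℝ (⊤ : ℕ∞) F)
    (a r : ℝ) (ha : 0 < a) (hr : 0 < r)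
    (hder : ∀ x : EuclideanSpace ℝ (Fin m), ‖x‖ ≤ r →
      ∀ v : EuclideanSpace ℝ (Fin m), ‖v‖ = 1 → a ≤ ‖fderiv ℝ F x v‖) :
    ∀ b : ℝ, 0 < b → b < a * r →
      {w : N | dist w (F 0) < b} ⊆ F '' {x : EuclideanSpace ℝ (Fin m) | ‖x‖ < b / a} := by
  intro b hb hbar w hw
  simp only [Set.mem_setOf_eq] at hw
  rw [dist_eq_norm] at hw
  -- scaled derivative bound
  have hder' : ∀ x : EuclideanSpace ℝ (Fin m), ‖x‖ ≤ r →
      ∀ v : EuclideanSpace ℝ (Fin m), a * ‖v‖ ≤ ‖fderiv ℝ F x v‖ := by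
    intro x hx v
    rcases eq_or_ne v 0 with rfl | hv
    · simp
    · have hnv : ‖v‖ ≠ 0 := norm_ne_zero_iff.mpr hv
      have h1 := hder x hx (‖v‖⁻¹ • v) (by
        rw [norm_smul, norm_inv, norm_norm, inv_mul_cancel₀ hnv])
      rw [map_smul, norm_smul, norm_inv, norm_norm] at h1
      rw [mul_comm]
      calc ‖v‖ * a ≤ ‖v‖ * (‖v‖⁻¹ * ‖fderiv ℝ F x v‖) :=
            mul_le_mul_of_nonneg_left h1 (norm_nonneg v)
        _ = ‖fderiv ℝ F x v‖ := by field_simp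
  -- the derivative is injective at each point of the r-ball
  have hinj : ∀ x : EuclideanSpace ℝ (Fin m), ‖x‖ ≤ r →
      Function.Injective (fderiv ℝ F x) := by
    intro x hx
    have h2 : Function.Injective ((fderiv ℝ F x : EuclideanSpace ℝ (Fin m) →ₗ[ℝ] N)) := by
      rw [← LinearMap.ker_eq_bot, LinearMap.ker_eq_bot']
      intro v hv
      by_contra h
      have h3 := hder' x hx v
      rw [ContinuousLinearMap.coe_coe] at hv
      rw [hv, norm_zero] at h3
      have h4 : 0 < ‖v‖ := norm_pos_iff.mpr h
      nlinarith
    exact h2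
  have hfinrank : Module.finrank ℝ (EuclideanSpace ℝ (Fin m)) = Module.finrank ℝ N := by
    simp [hdim]
  classical
  let e : ∀ x : EuclideanSpace ℝ (Fin m), ‖x‖ ≤ r → (EuclideanSpace ℝ (Fin m) ≃L[ℝ] N) :=
    fun x hx =>
      ((fderiv ℝ F x : EuclideanSpace ℝ (Fin m) →ₗ[ℝ] N).linearEquivOfInjective
        (hinj x hx) hfinrank).toContinuousLinearEquiv
  have he : ∀ (x : EuclideanSpace ℝ (Fin m)) (hx : ‖x‖ ≤ r) (v : EuclideanSpace ℝ (Fin m)),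
      e x hx v = fderiv ℝ F x v := fun x hx v => rfl
  have hesymm : ∀ (x : EuclideanSpace ℝ (Fin m)) (hx : ‖x‖ ≤ r) (u : N),
      ‖(e x hx).symm u‖ ≤ ‖u‖ / a := by
    intro x hx u
    rw [le_div_iff₀ ha, mul_comm]
    calc a * ‖(e x hx).symm u‖ ≤ ‖fderiv ℝ F x ((e x hx).symm u)‖ := hder' x hx _
      _ = ‖(e x hx) ((e x hx).symm u)‖ := by rw [he x hx]
      _ = ‖u‖ := by rw [(e x hx).apply_symm_apply]
  -- set up the path and constant c
  set c : ℝ := (‖w - F 0‖ / a + b / a) / 2 with hc_def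
  have hba : 0 < b / a := div_pos hb ha
  have hwba : ‖w - F 0‖ / a < b / a := by gcongr
  have hwc : ‖w - F 0‖ / a < c := by rw [hc_def]; linarith
  have hcb : c < b / a := by rw [hc_def]; linarith
  have hc0 : 0 < c := lt_of_le_of_lt (by positivity) hwc
  have hcr : c < r := lt_of_lt_of_le hcb (by
    rw [div_le_iff₀ ha]; linarith [mul_comm a r])
  set γ : ℝ → N := fun t => F 0 + t • (w - F 0) with hγ_def
  have hγcont : Continuous γ := by fun_prop
  -- the set A
  set A : Set ℝ := {t | t ∈ Set.Icc (0:ℝ) 1 ∧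
      ∃ x : EuclideanSpace ℝ (Fin m), ‖x‖ ≤ t * c ∧ F x = γ t} with hA_def
  have hA0 : (0:ℝ) ∈ A :=
    ⟨⟨le_refl 0, zero_le_one⟩, 0, by simp, by simp [hγ_def]⟩
  -- A is compact
  have hAcomp : IsCompact A := by
    set S : Set (ℝ × EuclideanSpace ℝ (Fin m)) :=
      {p | p.1 ∈ Set.Icc (0:ℝ) 1 ∧ ‖p.2‖ ≤ p.1 * c ∧ F p.2 = γ p.1} with hS_def
    have hSclosed : IsClosed S := by
      apply IsClosed.inter
      · exact isClosed_Icc.preimage continuous_fst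
      apply IsClosed.inter
      · exact isClosed_le continuous_snd.norm (continuous_fst.mul continuous_const)
      · exact isClosed_eq (hF.continuous.comp continuous_snd) (hγcont.comp continuous_fst)
    have hSsub : S ⊆ Set.Icc (0:ℝ) 1 ×ˢ Metric.closedBall (0:EuclideanSpace ℝ (Fin m)) c := by
      rintro ⟨t, x⟩ ⟨ht, hx, -⟩
      refine ⟨ht, ?_⟩
      rw [Metric.mem_closedBall, dist_zero_right]
      calc ‖x‖ ≤ t * c := hx
        _ ≤ 1 * c := by nlinarith [ht.1, ht.2, hc0.le]
        _ = c := one_mul c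
    have hScomp : IsCompact S :=
      ((isCompact_Icc.prod (isCompact_closedBall 0 c))).of_isClosed_subset hSclosed hSsub
    have hAim : A = Prod.fst '' S := by
      ext t
      constructor
      · rintro ⟨ht, x, hx, hFx⟩; exact ⟨⟨t, x⟩, ⟨ht, hx, hFx⟩, rfl⟩
      · rintro ⟨⟨t', x⟩, ⟨ht, hx, hFx⟩, rfl⟩; exact ⟨ht, x, hx, hFx⟩
    rw [hAim]
    exact hScomp.image continuous_fst
  set T : ℝ := sSup A with hT_def
  have hTA : T ∈ A := hAcomp.sSup_mem ⟨0, hA0⟩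
  obtain ⟨hTIcc, x0, hx0, hFx0⟩ := hTA
  -- claim T = 1
  have hT1 : T = 1 := by
    by_contra hne
    have hTlt : T < 1 := lt_of_le_of_ne hTIcc.2 hne
    have hx0c : ‖x0‖ ≤ c := le_trans hx0 (by nlinarith [hTIcc.1, hTIcc.2, hc0.le])
    have hx0r : ‖x0‖ ≤ r := le_trans hx0c hcr.le
    -- strict derivative and local inverse at x0
    have hsd : HasStrictFDerivAt F (↑(e x0 hx0r) : EuclideanSpace ℝ (Fin m) →L[ℝ] N) x0 := by
      have h1 : HasStrictFDerivAt F (fderiv ℝ F x0) x0 :=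
        hF.contDiffAt.hasStrictFDerivAt (by simp)
      have h2 : (↑(e x0 hx0r) : EuclideanSpace ℝ (Fin m) →L[ℝ] N) = fderiv ℝ F x0 := by
        ext v; exact he x0 hx0r v
      rw [h2]
      exact h1
    set linv : N → EuclideanSpace ℝ (Fin m) := hsd.localInverse F _ x0 with hlinv_def
    have hlinvx0 : linv (γ T) = x0 := by
      rw [← hFx0]; exact hsd.localInverse_apply_image
    -- derivative of t ↦ linv (γ t) at T
    have hγT : HasDerivAt γ (w - F 0) T := by
      have h1 : HasDerivAt (fun t : ℝ => t • (w - F 0)) ((1:ℝ) • (w - F 0)) T :=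
        (hasDerivAt_id T).smul_const (w - F 0)
      simpa [hγ_def, one_smul] using h1.const_add (F 0)
    have hlinvderiv : HasFDerivAt linv ((e x0 hx0r).symm : N →L[ℝ] EuclideanSpace ℝ (Fin m))
        (γ T) := by
      rw [← hFx0]
      exact hsd.to_localInverse.hasFDerivAt
    have hcomp : HasDerivAt (fun t => linv (γ t)) ((e x0 hx0r).symm (w - F 0)) T := by
      exact hlinvderiv.comp_hasDerivAt T hγT
    set d : EuclideanSpace ℝ (Fin m) := (e x0 hx0r).symm (w - F 0) with hd_def
    have hdc : ‖d‖ < c := lt_of_le_of_lt (hesymm x0 hx0r _) hwc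
    -- little-o bound
    have hlo := Asymptotics.IsLittleO.def (hasDerivAt_iff_isLittleO.mp hcomp)
      (show (0:ℝ) < c - ‖d‖ by linarith)
    -- right inverse eventually
    have hri : ∀ᶠ y in nhds (γ T), F (linv y) = y := by
      rw [← hFx0]
      exact hsd.eventually_right_inverse
    have hri' : ∀ᶠ t in nhds T, F (linv (γ t)) = γ t :=
      hγT.continuousAt.eventually hri
    have hev : ∀ᶠ t in nhds T,
        ‖linv (γ t) - linv (γ T) - (t - T) • d‖ ≤ (c - ‖d‖) * ‖t - T‖ ∧
        F (linv (γ t)) = γ t := by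
      filter_upwards [hlo, hri'] with t h1 h2
      exact ⟨by simpa using h1, h2⟩
    -- pick t ∈ (T, 1] close to T
    have hmem : ∀ᶠ t in nhdsWithin T (Set.Ioi T),
        (‖linv (γ t) - linv (γ T) - (t - T) • d‖ ≤ (c - ‖d‖) * ‖t - T‖ ∧
        F (linv (γ t)) = γ t) ∧ t ∈ Set.Ioc T 1 := by
      have h1 := nhdsWithin_le_nhds (a := T) (s := Set.Ioi T) hev
      have h2 : ∀ᶠ t in nhdsWithin T (Set.Ioi T), t ∈ Set.Ioc T 1 :=
        Ioc_mem_nhdsGT_of_mem ⟨le_refl T, hTlt⟩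
      filter_upwards [h1, h2] with t ht1 ht2 using ⟨ht1, ht2⟩
    obtain ⟨t, ⟨⟨hbnd, hFt⟩, hTt, ht1⟩⟩ := hmem.exists
    -- show t ∈ A
    have hxt : ‖linv (γ t)‖ ≤ t * c := by
      have h1 : ‖linv (γ t) - linv (γ T)‖ ≤ c * (t - T) := by
        calc ‖linv (γ t) - linv (γ T)‖
            ≤ ‖linv (γ t) - linv (γ T) - (t - T) • d‖ + ‖(t - T) • d‖ := by
              simpa using norm_add_le (linv (γ t) - linv (γ T) - (t - T) • d) ((t - T) • d)
          _ ≤ (c - ‖d‖) * ‖t - T‖ + ‖t - T‖ * ‖d‖ := by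
              rw [norm_smul, Real.norm_eq_abs]
              exact add_le_add hbnd (le_refl _)
          _ = c * ‖t - T‖ := by ring
          _ = c * (t - T) := by rw [Real.norm_eq_abs, abs_of_pos (by linarith)]
      calc ‖linv (γ t)‖ ≤ ‖linv (γ T)‖ + ‖linv (γ t) - linv (γ T)‖ := by
            simpa using norm_add_le (linv (γ T)) (linv (γ t) - linv (γ T))
        _ ≤ T * c + c * (t - T) := by rw [hlinvx0] at h1 ⊢; exact add_le_add hx0 h1
        _ = t * c := by ring
    have htA : t ∈ A := ⟨⟨le_trans hTIcc.1 (le_of_lt hTt), ht1⟩, linv (γ t), hxt, hFt⟩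
    have hle : t ≤ T := le_csSup ⟨1, fun s hs => hs.1.2⟩ htA
    linarith
  -- conclude
  rw [hT1] at hx0 hFx0
  refine ⟨x0, ?_, ?_⟩
  · simp only [Set.mem_setOf_eq]
    calc ‖x0‖ ≤ 1 * c := hx0
      _ = c := one_mul c
      _ < b / a := hcb
  · rw [hFx0, hγ_def]
    simp
end

section
/- Let g : ℝⁿ → ℝ be a smooth bump function supported in [−ε/2, ε/2]ⁿ with g ≡ 1 on [−ε/4, ε/4]ⁿ and C²-norm bounds ‖∂g‖ ≤ C/ε, ‖∂²g‖ ≤ C/ε², and let B : [0,1] → ℝ^{n×n} be C². Then the function G(t,v) := g(v)·vᵀB(t)v satisfies ‖G‖_{C²} ≤ k₇‖B‖_{C⁰} + ε k₇‖B‖_{C¹} + ε² k₇‖B‖_{C²} for a constant k₇ independent of 0 < ε < 1. -/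
open Matrix
open scoped Matrix.Norms.L2Operator

section Aux

variable {n : ℕ}

lemma abs_entry_le_l2_opNorm (A : Matrix (Fin n) (Fin n) ℝ) (i j : Fin n) :
    |A i j| ≤ ‖A‖ := by
  classical
  have h1 := A.l2_opNorm_mulVec (EuclideanSpace.single j (1 : ℝ))
  rw [EuclideanSpace.norm_single, norm_one, mul_one] at h1
  set y := (EuclideanSpace.equiv (Fin n) ℝ).symm (A *ᵥ (EuclideanSpace.single j (1 : ℝ))) with hy
  have hyi : y i = A i j := by
    simp [hy, Matrix.mulVec, dotProduct, EuclideanSpace.single_apply]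
  have h2 : |y i| ≤ ‖y‖ := by
    rw [EuclideanSpace.norm_eq]
    have h3 : |y i| = Real.sqrt (‖y i‖ ^ 2) := by
      rw [Real.sqrt_sq_eq_abs]; simp
    rw [h3]
    have h4 : ‖y i‖ ^ 2 ≤ ∑ m, ‖y m‖ ^ 2 :=
      Finset.single_le_sum (f := fun m => ‖y m‖ ^ 2) (fun m _ => sq_nonneg _) (Finset.mem_univ i)
    exact Real.sqrt_le_sqrt h4
  calc |A i j| = |y i| := by rw [hyi]
    _ ≤ ‖y‖ := h2
    _ ≤ ‖A‖ := h1

noncomputable def entryCLM (i j : Fin n) : Matrix (Fin n) (Fin n) ℝ →L[ℝ] ℝ :=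
  LinearMap.toContinuousLinearMap (Matrix.entryLinearMap ℝ ℝ i j)

@[simp] lemma entryCLM_apply (i j : Fin n) (A : Matrix (Fin n) (Fin n) ℝ) :
    entryCLM i j A = A i j := rfl

lemma norm_entryCLM_le (i j : Fin n) :
    ‖(entryCLM i j : Matrix (Fin n) (Fin n) ℝ →L[ℝ] ℝ)‖ ≤ 1 :=
  ContinuousLinearMap.opNorm_le_bound _ zero_le_one fun A => by
    rw [one_mul]; simpa using abs_entry_le_l2_opNorm A i j

lemma norm_iteratedFDeriv_comp_clm_right {E G F : Type*} [NormedAddCommGroup E] [NormedSpace ℝ E]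
    [NormedAddCommGroup F] [NormedSpace ℝ F] [NormedAddCommGroup G] [NormedSpace ℝ G]
    {f : E → F} {N : WithTop ℕ∞} (hf : ContDiff ℝ N f) (L : G →L[ℝ] E) (hL : ‖L‖ ≤ 1)
    (x : G) {i : ℕ} (hi : (i : WithTop ℕ∞) ≤ N) :
    ‖iteratedFDeriv ℝ i (f ∘ L) x‖ ≤ ‖iteratedFDeriv ℝ i f (L x)‖ := by
  rw [L.iteratedFDeriv_comp_right hf x hi]
  refine (ContinuousMultilinearMap.norm_compContinuousLinearMap_le _ _).trans ?_
  have : (∏ _j : Fin i, ‖L‖) ≤ 1 :=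
    Finset.prod_le_one (fun _ _ => norm_nonneg _) (fun _ _ => hL)
  calc ‖iteratedFDeriv ℝ i f (L x)‖ * ∏ _j : Fin i, ‖L‖
      ≤ ‖iteratedFDeriv ℝ i f (L x)‖ * 1 :=
        mul_le_mul_of_nonneg_left this (norm_nonneg _)
    _ = _ := mul_one _

lemma norm_iteratedFDeriv_comp_clm_left {E F G : Type*} [NormedAddCommGroup E] [NormedSpace ℝ E]
    [NormedAddCommGroup F] [NormedSpace ℝ F] [NormedAddCommGroup G] [NormedSpace ℝ G]
    {f : E → F} {N : WithTop ℕ∞} (hf : ContDiff ℝ N f) (L : F →L[ℝ] G) (hL : ‖L‖ ≤ 1)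
    (x : E) {i : ℕ} (hi : (i : WithTop ℕ∞) ≤ N) :
    ‖iteratedFDeriv ℝ i (L ∘ f) x‖ ≤ ‖iteratedFDeriv ℝ i f x‖ := by
  rw [L.iteratedFDeriv_comp_left hf.contDiffAt hi]
  refine (ContinuousLinearMap.norm_compContinuousMultilinearMap_le _ _).trans ?_
  exact mul_le_of_le_one_left (norm_nonneg _) hL

lemma norm_iteratedFDeriv_one_clm {E F : Type*} [NormedAddCommGroup E] [NormedSpace ℝ E]
    [NormedAddCommGroup F] [NormedSpace ℝ F] (L : E →L[ℝ] F) (x : E) :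
    ‖iteratedFDeriv ℝ 1 (⇑L) x‖ ≤ ‖L‖ := by
  have h : ‖iteratedFDeriv ℝ 1 (⇑L) x‖ = ‖iteratedFDeriv ℝ 0 (fderiv ℝ (⇑L)) x‖ := by
    rw [norm_iteratedFDeriv_fderiv]
  rw [h, norm_iteratedFDeriv_zero, L.fderiv]

lemma iteratedFDeriv_two_clm {E F : Type*} [NormedAddCommGroup E] [NormedSpace ℝ E]
    [NormedAddCommGroup F] [NormedSpace ℝ F] (L : E →L[ℝ] F) (x : E) :
    ‖iteratedFDeriv ℝ 2 (⇑L) x‖ = 0 := by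
  have h : ‖iteratedFDeriv ℝ 2 (⇑L) x‖ = ‖iteratedFDeriv ℝ 1 (fderiv ℝ (⇑L)) x‖ := by
    rw [norm_iteratedFDeriv_fderiv]
  have h2 : fderiv ℝ (⇑L) = fun _ => L := funext fun y => L.fderiv
  rw [h, h2, iteratedFDeriv_const_of_ne one_ne_zero]
  simp

end Aux

set_option maxHeartbeats 1600000 in
/-- Contreras, Lemma 7.6. For bump functions `g` supported in
`[-ε/2, ε/2]ⁿ`, with `g ≡ 1` on `[-ε/4, ε/4]ⁿ` and derivative bounds `C/ε`, `C/ε²`, and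
`B : [0,1] → ℝ^{n×n}` of class `C²`, the function `G(t,v) = g(v) vᵀ B(t) v` satisfies
`‖G‖_{C²} ≤ k₇ ‖B‖_{C⁰} + ε k₇ ‖B‖_{C¹} + ε² k₇ ‖B‖_{C²}` on `[0,1] × ℝⁿ`, with `k₇`
independent of `0 < ε < 1`. Here `‖B‖_{C^k}`-bounds are expressed via `b₀, b₁, b₂`. -/
theorem quadratic_bump_C2_bound (n : ℕ) (Cg : ℝ) (hCg : 0 < Cg) :
    ∃ k₇ > (0 : ℝ), ∀ ε : ℝ, ε ∈ Set.Ioo (0 : ℝ) 1 →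
      ∀ g : (Fin n → ℝ) → ℝ, ContDiff ℝ (⊤ : ℕ∞) g →
      (∀ v, g v ≠ 0 → ∀ i, |v i| ≤ ε / 2) →
      (∀ v, (∀ i, |v i| ≤ ε / 4) → g v = 1) →
      (∀ v, ‖fderiv ℝ g v‖ ≤ Cg / ε) →
      (∀ v, ‖iteratedFDeriv ℝ 2 g v‖ ≤ Cg / ε ^ 2) →
      ∀ B : ℝ → Matrix (Fin n) (Fin n) ℝ, ContDiff ℝ 2 B →
      ∀ b₀ b₁ b₂ : ℝ,
      (∀ t ∈ Set.Icc (0 : ℝ) 1, ‖B t‖ ≤ b₀) →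
      (∀ t ∈ Set.Icc (0 : ℝ) 1, ‖B t‖ ≤ b₁ ∧ ‖deriv B t‖ ≤ b₁) →
      (∀ t ∈ Set.Icc (0 : ℝ) 1,
        ‖B t‖ ≤ b₂ ∧ ‖deriv B t‖ ≤ b₂ ∧ ‖deriv (deriv B) t‖ ≤ b₂) →
      ∀ j : ℕ, j ≤ 2 → ∀ p : ℝ × (Fin n → ℝ), p.1 ∈ Set.Icc (0 : ℝ) 1 →
        ‖iteratedFDeriv ℝ j
            (fun q : ℝ × (Fin n → ℝ) =>
              g q.2 * ∑ i : Fin n, ∑ l : Fin n, B q.1 i l * q.2 i * q.2 l) p‖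
          ≤ k₇ * b₀ + ε * k₇ * b₁ + ε ^ 2 * k₇ * b₂ := by
  classical
  have hK0 : (0:ℝ) ≤ (n:ℝ)^2 := sq_nonneg _
  refine ⟨(n:ℝ)^2 * (12 * Cg + 12) + 1, by positivity, ?_⟩
  set K : ℝ := (n:ℝ)^2 with hKdef
  set k₇ : ℝ := K * (12 * Cg + 12) + 1 with hk₇def
  intro ε hε g hg hsupp hone hg1 hg2 B hB b₀ b₁ b₂ hb₀ hb₁ hb₂ j hj p hp
  obtain ⟨hε0, hε1⟩ := hε
  have hε1' : ε ≤ 1 := le_of_lt hε1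
  have hb₀0 : 0 ≤ b₀ := le_trans (norm_nonneg _) (hb₀ 0 ⟨le_refl 0, zero_le_one⟩)
  have hb₁0 : 0 ≤ b₁ := le_trans (norm_nonneg _) ((hb₁ 0 ⟨le_refl 0, zero_le_one⟩).1)
  have hb₂0 : 0 ≤ b₂ := le_trans (norm_nonneg _) ((hb₂ 0 ⟨le_refl 0, zero_le_one⟩).1)
  have hk₇0 : (0:ℝ) < k₇ := by positivity
  have hRHS0 : 0 ≤ k₇ * b₀ + ε * k₇ * b₁ + ε ^ 2 * k₇ * b₂ := by positivity
  by_cases hpsupp : p.2 ∈ tsupport g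
  swap
  · -- off the support : everything vanishes near p
    have hopen : IsOpen (Prod.snd ⁻¹' (tsupport g)ᶜ : Set (ℝ × (Fin n → ℝ))) :=
      (isClosed_tsupport g).isOpen_compl.preimage continuous_snd
    have hzero : iteratedFDeriv ℝ j
        (fun q : ℝ × (Fin n → ℝ) =>
          g q.2 * ∑ i : Fin n, ∑ l : Fin n, B q.1 i l * q.2 i * q.2 l) p = 0 := by
      have hev : (fun q : ℝ × (Fin n → ℝ) =>
          g q.2 * ∑ i : Fin n, ∑ l : Fin n, B q.1 i l * q.2 i * q.2 l)
            =ᶠ[nhdsWithin p Set.univ] (fun _ => (0:ℝ)) := by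
        rw [nhdsWithin_univ]
        filter_upwards [hopen.mem_nhds hpsupp] with q hq
        simp [image_eq_zero_of_notMem_tsupport hq]
      have hx : (fun q : ℝ × (Fin n → ℝ) =>
          g q.2 * ∑ i : Fin n, ∑ l : Fin n, B q.1 i l * q.2 i * q.2 l) p = (fun _ => (0:ℝ)) p := by
        simp [image_eq_zero_of_notMem_tsupport hpsupp]
      rw [← iteratedFDerivWithin_univ, hev.iteratedFDerivWithin_eq hx j,
        iteratedFDerivWithin_univ, iteratedFDeriv_zero_fun]
      rfl
    rw [hzero]
    simpa using hRHS0
  -- p.2 lies in the closed box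
  have hboxclosed : IsClosed {v : Fin n → ℝ | ∀ i, |v i| ≤ ε/2} := by
    have : {v : Fin n → ℝ | ∀ i, |v i| ≤ ε/2} = ⋂ i, {v : Fin n → ℝ | |v i| ≤ ε/2} := by
      ext v; simp [Set.mem_iInter]
    rw [this]
    exact isClosed_iInter fun i => isClosed_le ((continuous_apply i).abs) continuous_const
  have hpbox : ∀ i, |p.2 i| ≤ ε/2 :=
    closure_minimal (fun v hv => hsupp v hv) hboxclosed hpsupp
  -- bound on |g|
  have hM0 : (0:ℝ) ≤ 1 + 2*Cg := by linarith
  have hgb : ∀ v, |g v| ≤ 1 + 2*Cg := by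
    intro v
    rcases Nat.eq_zero_or_pos n with hn | hn
    · subst hn
      have h1 : g v = 1 := hone v (fun i => i.elim0)
      rw [h1]; simp; linarith
    · by_cases hgv : g v = 0
      · rw [hgv]; simpa using hM0
      · have hv := hsupp v hgv
        set i0 : Fin n := ⟨0, hn⟩ with hi0
        set w : Fin n → ℝ := v + (2*ε) • (Pi.single i0 1 : Fin n → ℝ) with hw
        have hwi : w i0 = v i0 + 2*ε := by simp [hw]
        have hgw : g w = 0 := by
          by_contra hgw
          have h2 := hsupp w hgw i0
          rw [hwi] at h2
          have h3 : v i0 + 2*ε ≤ ε/2 := le_trans (le_abs_self _) h2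
          have h4 := abs_le.mp (hv i0)
          linarith [h4.1]
        have hdiff : ∀ x ∈ (Set.univ : Set (Fin n → ℝ)), DifferentiableAt ℝ g x :=
          fun x _ => (hg.differentiable (by simp)).differentiableAt
        have hbound : ∀ x ∈ (Set.univ : Set (Fin n → ℝ)), ‖fderiv ℝ g x‖ ≤ Cg/ε :=
          fun x _ => hg1 x
        have hmv := Convex.norm_image_sub_le_of_norm_fderiv_le hdiff hbound convex_univ
          (Set.mem_univ w) (Set.mem_univ v)
        have hvw : v - w = -((2*ε) • (Pi.single i0 1 : Fin n → ℝ)) := by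
          rw [hw]; abel
        have hnorm : ‖v - w‖ = 2*ε := by
          rw [hvw, norm_neg, norm_smul, Pi.norm_single]
          simp [abs_of_pos hε0]
        have hfin : Cg/ε * (2*ε) = 2*Cg := by field_simp
        calc |g v| = ‖g v - g w‖ := by rw [hgw, sub_zero, Real.norm_eq_abs]
          _ ≤ Cg/ε * ‖v - w‖ := hmv
          _ = 2*Cg := by rw [hnorm, hfin]
          _ ≤ 1 + 2*Cg := by linarith
  -- bounds on the iterated derivatives of q ↦ g q.2
  have hgC2 : ContDiff ℝ 2 g := hg.of_le (WithTop.coe_le_coe.mpr (le_top : (2:ℕ∞) ≤ ⊤))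
  have hgPcd : ContDiff ℝ 2 (fun q : ℝ × (Fin n → ℝ) => g q.2) :=
    hgC2.comp contDiff_snd
  have hgP0 : ∀ q : ℝ × (Fin n → ℝ),
      ‖iteratedFDeriv ℝ 0 (fun q : ℝ × (Fin n → ℝ) => g q.2) q‖ ≤ 1 + 2*Cg := by
    intro q; rw [norm_iteratedFDeriv_zero]
    simpa using hgb q.2
  have hgcomp : (fun q : ℝ × (Fin n → ℝ) => g q.2)
      = g ∘ ⇑(ContinuousLinearMap.snd ℝ ℝ (Fin n → ℝ)) := rfl
  have hgP1 : ∀ q : ℝ × (Fin n → ℝ),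
      ‖iteratedFDeriv ℝ 1 (fun q : ℝ × (Fin n → ℝ) => g q.2) q‖ ≤ Cg/ε := by
    intro q
    rw [hgcomp]
    refine le_trans (norm_iteratedFDeriv_comp_clm_right hgC2
      (ContinuousLinearMap.snd ℝ ℝ (Fin n → ℝ)) (ContinuousLinearMap.norm_snd_le ..) q
      (by norm_num)) ?_
    have h1 : ‖iteratedFDeriv ℝ 1 g (q.2)‖ = ‖fderiv ℝ g (q.2)‖ := by
      rw [← norm_iteratedFDeriv_fderiv, norm_iteratedFDeriv_zero]
    exact le_trans (le_of_eq h1) (hg1 q.2)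
  have hgP2 : ∀ q : ℝ × (Fin n → ℝ),
      ‖iteratedFDeriv ℝ 2 (fun q : ℝ × (Fin n → ℝ) => g q.2) q‖ ≤ Cg/ε^2 := by
    intro q
    rw [hgcomp]
    refine le_trans (norm_iteratedFDeriv_comp_clm_right hgC2
      (ContinuousLinearMap.snd ℝ ℝ (Fin n → ℝ)) (ContinuousLinearMap.norm_snd_le ..) q
      (by norm_num)) ?_
    exact hg2 q.2
  -- bounds for entries of B
  have hf1cd : ∀ i l : Fin n, ContDiff ℝ 2 (fun q : ℝ × (Fin n → ℝ) => B q.1 i l) :=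
    fun i l => ((entryCLM i l).contDiff.comp hB).comp contDiff_fst
  have hA0 : ∀ i l : Fin n,
      ‖iteratedFDeriv ℝ 0 (fun q : ℝ × (Fin n → ℝ) => B q.1 i l) p‖ ≤ b₀ := by
    intro i l; rw [norm_iteratedFDeriv_zero]
    exact le_trans (by simpa using abs_entry_le_l2_opNorm (B p.1) i l) (hb₀ p.1 hp)
  have hcompB : ∀ i l : Fin n, (fun q : ℝ × (Fin n → ℝ) => B q.1 i l)
      = (⇑(entryCLM i l) ∘ B) ∘ ⇑(ContinuousLinearMap.fst ℝ ℝ (Fin n → ℝ)) := fun i l => rfl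
  have hA1 : ∀ i l : Fin n,
      ‖iteratedFDeriv ℝ 1 (fun q : ℝ × (Fin n → ℝ) => B q.1 i l) p‖ ≤ b₁ := by
    intro i l
    rw [hcompB i l]
    refine le_trans (norm_iteratedFDeriv_comp_clm_right ((entryCLM i l).contDiff.comp hB)
      (ContinuousLinearMap.fst ℝ ℝ (Fin n → ℝ)) (ContinuousLinearMap.norm_fst_le ..) p
      (by norm_num)) ?_
    refine le_trans (norm_iteratedFDeriv_comp_clm_left hB (entryCLM i l)
      (norm_entryCLM_le i l) _ (by norm_num)) ?_
    rw [norm_iteratedFDeriv_eq_norm_iteratedDeriv, iteratedDeriv_one]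
    exact (hb₁ p.1 hp).2
  have hA2 : ∀ i l : Fin n,
      ‖iteratedFDeriv ℝ 2 (fun q : ℝ × (Fin n → ℝ) => B q.1 i l) p‖ ≤ b₂ := by
    intro i l
    rw [hcompB i l]
    refine le_trans (norm_iteratedFDeriv_comp_clm_right ((entryCLM i l).contDiff.comp hB)
      (ContinuousLinearMap.fst ℝ ℝ (Fin n → ℝ)) (ContinuousLinearMap.norm_fst_le ..) p
      (by norm_num)) ?_
    refine le_trans (norm_iteratedFDeriv_comp_clm_left hB (entryCLM i l)
      (norm_entryCLM_le i l) _ (by norm_num)) ?_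
    rw [norm_iteratedFDeriv_eq_norm_iteratedDeriv, iteratedDeriv_succ, iteratedDeriv_one]
    exact (hb₂ p.1 hp).2.2
  -- bounds for the coordinate functions
  have hccomp : ∀ m : Fin n, (fun q : ℝ × (Fin n → ℝ) => q.2 m)
      = ⇑((ContinuousLinearMap.proj m).comp
          (ContinuousLinearMap.snd ℝ ℝ (Fin n → ℝ))) := fun m => rfl
  have hcnorm : ∀ m : Fin n, ‖(ContinuousLinearMap.proj m).comp
      (ContinuousLinearMap.snd ℝ ℝ (Fin n → ℝ))‖ ≤ 1 := by
    intro m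
    refine ContinuousLinearMap.opNorm_le_bound _ zero_le_one fun q => ?_
    rw [one_mul]
    exact le_trans (norm_le_pi_norm q.2 m) (norm_snd_le q)
  have hcoordcd : ∀ m : Fin n, ContDiff ℝ 2 (fun q : ℝ × (Fin n → ℝ) => q.2 m) := by
    intro m; rw [hccomp m]; exact ContinuousLinearMap.contDiff _
  have hC0 : ∀ m : Fin n,
      ‖iteratedFDeriv ℝ 0 (fun q : ℝ × (Fin n → ℝ) => q.2 m) p‖ ≤ ε/2 := by
    intro m; rw [norm_iteratedFDeriv_zero]
    simpa using hpbox m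
  have hC1 : ∀ m : Fin n,
      ‖iteratedFDeriv ℝ 1 (fun q : ℝ × (Fin n → ℝ) => q.2 m) p‖ ≤ 1 := by
    intro m; rw [hccomp m]
    exact le_trans (norm_iteratedFDeriv_one_clm _ p) (hcnorm m)
  have hC2 : ∀ m : Fin n,
      ‖iteratedFDeriv ℝ 2 (fun q : ℝ × (Fin n → ℝ) => q.2 m) p‖ = 0 := by
    intro m; rw [hccomp m]
    exact iteratedFDeriv_two_clm _ p
  have hε2 : (0:ℝ) < ε/2 := by linarith
  -- bounds for u = B q.1 i l * q.2 i
  have hucd : ∀ i l : Fin n, ContDiff ℝ 2 (fun q : ℝ × (Fin n → ℝ) => B q.1 i l * q.2 i) :=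
    fun i l => (hf1cd i l).mul (hcoordcd i)
  have hU0 : ∀ i l : Fin n,
      ‖iteratedFDeriv ℝ 0 (fun q : ℝ × (Fin n → ℝ) => B q.1 i l * q.2 i) p‖ ≤ b₀ * (ε/2) := by
    intro i l; rw [norm_iteratedFDeriv_zero]
    have h1 : ‖B p.1 i l * p.2 i‖ = |B p.1 i l| * |p.2 i| := abs_mul _ _
    rw [h1]
    exact mul_le_mul (le_trans (abs_entry_le_l2_opNorm (B p.1) i l) (hb₀ p.1 hp))
      (hpbox i) (abs_nonneg _) hb₀0
  have hU1 : ∀ i l : Fin n,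
      ‖iteratedFDeriv ℝ 1 (fun q : ℝ × (Fin n → ℝ) => B q.1 i l * q.2 i) p‖
        ≤ b₁ * (ε/2) + b₀ := by
    intro i l
    have h := norm_iteratedFDeriv_mul_le (𝕜 := ℝ) (hf1cd i l) (hcoordcd i) p
      (n := 1) (by norm_num)
    simp only [Finset.sum_range_succ, Finset.sum_range_zero, zero_add, Nat.choose_zero_right,
      Nat.choose_one_right, Nat.choose_self, Nat.cast_one, Nat.cast_ofNat, one_mul, Nat.sub_zero,
      Nat.sub_self, Nat.reduceSub] at h
    have e1 : ‖iteratedFDeriv ℝ 0 (fun q : ℝ × (Fin n → ℝ) => B q.1 i l) p‖ *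
        ‖iteratedFDeriv ℝ 1 (fun q : ℝ × (Fin n → ℝ) => q.2 i) p‖ ≤ b₀ * 1 :=
      mul_le_mul (hA0 i l) (hC1 i) (norm_nonneg _) hb₀0
    have e2 : ‖iteratedFDeriv ℝ 1 (fun q : ℝ × (Fin n → ℝ) => B q.1 i l) p‖ *
        ‖iteratedFDeriv ℝ 0 (fun q : ℝ × (Fin n → ℝ) => q.2 i) p‖ ≤ b₁ * (ε/2) :=
      mul_le_mul (hA1 i l) (hC0 i) (norm_nonneg _) hb₁0
    linarith
  have hU2 : ∀ i l : Fin n,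
      ‖iteratedFDeriv ℝ 2 (fun q : ℝ × (Fin n → ℝ) => B q.1 i l * q.2 i) p‖
        ≤ b₂ * (ε/2) + 2*b₁ := by
    intro i l
    have h := norm_iteratedFDeriv_mul_le (𝕜 := ℝ) (hf1cd i l) (hcoordcd i) p
      (n := 2) (by norm_num)
    simp only [Finset.sum_range_succ, Finset.sum_range_zero, zero_add, Nat.choose_zero_right,
      Nat.choose_one_right, Nat.choose_self, Nat.cast_one, Nat.cast_ofNat, one_mul, Nat.sub_zero,
      Nat.sub_self, Nat.reduceSub] at h
    have e0 : ‖iteratedFDeriv ℝ 0 (fun q : ℝ × (Fin n → ℝ) => B q.1 i l) p‖ *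
        ‖iteratedFDeriv ℝ 2 (fun q : ℝ × (Fin n → ℝ) => q.2 i) p‖ = 0 := by
      rw [hC2 i, mul_zero]
    have e1 : ‖iteratedFDeriv ℝ 1 (fun q : ℝ × (Fin n → ℝ) => B q.1 i l) p‖ *
        ‖iteratedFDeriv ℝ 1 (fun q : ℝ × (Fin n → ℝ) => q.2 i) p‖ ≤ b₁ * 1 :=
      mul_le_mul (hA1 i l) (hC1 i) (norm_nonneg _) hb₁0
    have e2 : ‖iteratedFDeriv ℝ 2 (fun q : ℝ × (Fin n → ℝ) => B q.1 i l) p‖ *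
        ‖iteratedFDeriv ℝ 0 (fun q : ℝ × (Fin n → ℝ) => q.2 i) p‖ ≤ b₂ * (ε/2) :=
      mul_le_mul (hA2 i l) (hC0 i) (norm_nonneg _) hb₂0
    linarith
  -- bounds for the full summand s i l = B q.1 i l * q.2 i * q.2 l
  have hscd : ∀ i l : Fin n,
      ContDiff ℝ 2 (fun q : ℝ × (Fin n → ℝ) => B q.1 i l * q.2 i * q.2 l) :=
    fun i l => (hucd i l).mul (hcoordcd l)
  have hP0 : ∀ i l : Fin n,
      ‖iteratedFDeriv ℝ 0 (fun q : ℝ × (Fin n → ℝ) => B q.1 i l * q.2 i * q.2 l) p‖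
        ≤ b₀ * (ε/2) * (ε/2) := by
    intro i l; rw [norm_iteratedFDeriv_zero]
    have h1 : ‖B p.1 i l * p.2 i * p.2 l‖ = |B p.1 i l * p.2 i| * |p.2 l| := abs_mul _ _
    rw [h1]
    have h2 : |B p.1 i l * p.2 i| ≤ b₀ * (ε/2) := by
      rw [abs_mul]
      exact mul_le_mul (le_trans (abs_entry_le_l2_opNorm (B p.1) i l) (hb₀ p.1 hp))
        (hpbox i) (abs_nonneg _) hb₀0
    exact mul_le_mul h2 (hpbox l) (abs_nonneg _) (by positivity)
  have hP1 : ∀ i l : Fin n,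
      ‖iteratedFDeriv ℝ 1 (fun q : ℝ × (Fin n → ℝ) => B q.1 i l * q.2 i * q.2 l) p‖
        ≤ (b₁ * (ε/2) + b₀) * (ε/2) + b₀ * (ε/2) := by
    intro i l
    have h := norm_iteratedFDeriv_mul_le (𝕜 := ℝ) (hucd i l) (hcoordcd l) p
      (n := 1) (by norm_num)
    simp only [Finset.sum_range_succ, Finset.sum_range_zero, zero_add, Nat.choose_zero_right,
      Nat.choose_one_right, Nat.choose_self, Nat.cast_one, Nat.cast_ofNat, one_mul, Nat.sub_zero,
      Nat.sub_self, Nat.reduceSub] at h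
    have e1 : ‖iteratedFDeriv ℝ 0 (fun q : ℝ × (Fin n → ℝ) => B q.1 i l * q.2 i) p‖ *
        ‖iteratedFDeriv ℝ 1 (fun q : ℝ × (Fin n → ℝ) => q.2 l) p‖ ≤ (b₀ * (ε/2)) * 1 :=
      mul_le_mul (hU0 i l) (hC1 l) (norm_nonneg _) (by positivity)
    have e2 : ‖iteratedFDeriv ℝ 1 (fun q : ℝ × (Fin n → ℝ) => B q.1 i l * q.2 i) p‖ *
        ‖iteratedFDeriv ℝ 0 (fun q : ℝ × (Fin n → ℝ) => q.2 l) p‖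
          ≤ (b₁ * (ε/2) + b₀) * (ε/2) :=
      mul_le_mul (hU1 i l) (hC0 l) (norm_nonneg _) (by positivity)
    linarith
  have hP2 : ∀ i l : Fin n,
      ‖iteratedFDeriv ℝ 2 (fun q : ℝ × (Fin n → ℝ) => B q.1 i l * q.2 i * q.2 l) p‖
        ≤ (b₂ * (ε/2) + 2*b₁) * (ε/2) + 2 * (b₁ * (ε/2) + b₀) := by
    intro i l
    have h := norm_iteratedFDeriv_mul_le (𝕜 := ℝ) (hucd i l) (hcoordcd l) p
      (n := 2) (by norm_num)
    simp only [Finset.sum_range_succ, Finset.sum_range_zero, zero_add, Nat.choose_zero_right,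
      Nat.choose_one_right, Nat.choose_self, Nat.cast_one, Nat.cast_ofNat, one_mul, Nat.sub_zero,
      Nat.sub_self, Nat.reduceSub] at h
    have e0 : ‖iteratedFDeriv ℝ 0 (fun q : ℝ × (Fin n → ℝ) => B q.1 i l * q.2 i) p‖ *
        ‖iteratedFDeriv ℝ 2 (fun q : ℝ × (Fin n → ℝ) => q.2 l) p‖ = 0 := by
      rw [hC2 l, mul_zero]
    have e1 : ‖iteratedFDeriv ℝ 1 (fun q : ℝ × (Fin n → ℝ) => B q.1 i l * q.2 i) p‖ *
        ‖iteratedFDeriv ℝ 1 (fun q : ℝ × (Fin n → ℝ) => q.2 l) p‖ ≤ (b₁ * (ε/2) + b₀) * 1 :=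
      mul_le_mul (hU1 i l) (hC1 l) (norm_nonneg _) (by positivity)
    have e2 : ‖iteratedFDeriv ℝ 2 (fun q : ℝ × (Fin n → ℝ) => B q.1 i l * q.2 i) p‖ *
        ‖iteratedFDeriv ℝ 0 (fun q : ℝ × (Fin n → ℝ) => q.2 l) p‖
          ≤ (b₂ * (ε/2) + 2*b₁) * (ε/2) :=
      mul_le_mul (hU2 i l) (hC0 l) (norm_nonneg _) (by positivity)
    linarith
  -- bound for the double sum
  have hTcd : ContDiff ℝ 2 (fun q : ℝ × (Fin n → ℝ) =>
      ∑ i : Fin n, ∑ l : Fin n, B q.1 i l * q.2 i * q.2 l) :=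
    ContDiff.sum fun i _ => ContDiff.sum fun l _ => hscd i l
  have hT : ∀ jj : ℕ, (jj:WithTop ℕ∞) ≤ 2 → ∀ Cb : ℝ,
      (∀ i l : Fin n,
        ‖iteratedFDeriv ℝ jj (fun q : ℝ × (Fin n → ℝ) => B q.1 i l * q.2 i * q.2 l) p‖ ≤ Cb) →
      ‖iteratedFDeriv ℝ jj (fun q : ℝ × (Fin n → ℝ) =>
        ∑ i : Fin n, ∑ l : Fin n, B q.1 i l * q.2 i * q.2 l) p‖ ≤ K * Cb := by
    intro jj hjj Cb hCb
    have hfun : (fun q : ℝ × (Fin n → ℝ) => ∑ i : Fin n, ∑ l : Fin n, B q.1 i l * q.2 i * q.2 l)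
        = (fun q : ℝ × (Fin n → ℝ) =>
            ∑ z : Fin n × Fin n, B q.1 z.1 z.2 * q.2 z.1 * q.2 z.2) := by
      funext q; rw [Fintype.sum_prod_type]
    rw [hfun]
    have e2 : iteratedFDeriv ℝ jj (fun q : ℝ × (Fin n → ℝ) =>
        ∑ z : Fin n × Fin n, B q.1 z.1 z.2 * q.2 z.1 * q.2 z.2)
        = ∑ z : Fin n × Fin n, iteratedFDeriv ℝ jj
            (fun q : ℝ × (Fin n → ℝ) => B q.1 z.1 z.2 * q.2 z.1 * q.2 z.2) :=
      iteratedFDeriv_sum (fun z _ => (hscd z.1 z.2).of_le hjj)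
    rw [e2, Finset.sum_apply]
    refine le_trans (norm_sum_le _ _) ?_
    have h3 : ∑ z : Fin n × Fin n, ‖iteratedFDeriv ℝ jj
        (fun q : ℝ × (Fin n → ℝ) => B q.1 z.1 z.2 * q.2 z.1 * q.2 z.2) p‖
        ≤ ∑ _z : Fin n × Fin n, Cb := Finset.sum_le_sum fun z _ => hCb z.1 z.2
    refine le_trans h3 ?_
    rw [Finset.sum_const, Finset.card_univ, Fintype.card_prod, Fintype.card_fin, nsmul_eq_mul]
    apply le_of_eq
    rw [hKdef]
    push_cast
    ring
  -- useful identities for the ε-divisions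
  have hd1 : Cg/ε * ε = Cg := div_mul_cancel₀ Cg (ne_of_gt hε0)
  have hd2 : Cg/ε^2 * ε^2 = Cg := div_mul_cancel₀ Cg (by positivity)
  have hd1nn : 0 ≤ Cg/ε := by positivity
  have hd2nn : 0 ≤ Cg/ε^2 := by positivity
  -- key comparisons with k₇
  have hkey : (1+2*Cg)*K ≤ k₇ := by
    rw [hk₇def]; nlinarith [mul_nonneg hK0 hCg.le, hK0]
  have hkey2 : (1+2*Cg)*K + Cg*K ≤ k₇ := by
    rw [hk₇def]; nlinarith [mul_nonneg hK0 hCg.le, hK0]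
  have hkey3 : 2*((1+2*Cg)*K) + Cg*K ≤ k₇ := by
    rw [hk₇def]; nlinarith [mul_nonneg hK0 hCg.le, hK0]
  have hkey4 : 2*((1+2*Cg)*K) + 3*(Cg*K) ≤ k₇ := by
    rw [hk₇def]; nlinarith [mul_nonneg hK0 hCg.le, hK0]
  have hsq : ε^2 ≤ 1 := by nlinarith
  -- now the three cases
  interval_cases j
  · -- j = 0
    rw [norm_iteratedFDeriv_zero]
    have h1 : ‖g p.2 * ∑ i : Fin n, ∑ l : Fin n, B p.1 i l * p.2 i * p.2 l‖
        = |g p.2| * ‖∑ i : Fin n, ∑ l : Fin n, B p.1 i l * p.2 i * p.2 l‖ := abs_mul _ _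
    rw [h1]
    have h2 : ‖∑ i : Fin n, ∑ l : Fin n, B p.1 i l * p.2 i * p.2 l‖
        ≤ K * (b₀ * (ε/2) * (ε/2)) := by
      have := hT 0 (by norm_num) _ hP0
      rwa [norm_iteratedFDeriv_zero] at this
    have h3 : |g p.2| * ‖∑ i : Fin n, ∑ l : Fin n, B p.1 i l * p.2 i * p.2 l‖
        ≤ (1 + 2*Cg) * (K * (b₀ * (ε/2) * (ε/2))) :=
      mul_le_mul (hgb p.2) h2 (norm_nonneg _) hM0
    refine le_trans h3 ?_
    nlinarith [mul_nonneg (mul_nonneg (mul_nonneg hM0 hK0) hb₀0) (sub_nonneg.mpr hsq),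
      mul_nonneg (sub_nonneg.mpr hkey) hb₀0,
      mul_nonneg (mul_nonneg hM0 hK0) hb₀0,
      mul_nonneg (mul_nonneg hε0.le hk₇0.le) hb₁0,
      mul_nonneg (mul_nonneg (mul_nonneg hε0.le hε0.le) hk₇0.le) hb₂0,
      mul_nonneg hk₇0.le hb₀0]
  · -- j = 1
    have hT0 : ‖iteratedFDeriv ℝ 0 (fun q : ℝ × (Fin n → ℝ) =>
        ∑ i : Fin n, ∑ l : Fin n, B q.1 i l * q.2 i * q.2 l) p‖
        ≤ K * (b₀ * (ε/2) * (ε/2)) := hT 0 (by norm_num) _ hP0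
    have hT1 : ‖iteratedFDeriv ℝ 1 (fun q : ℝ × (Fin n → ℝ) =>
        ∑ i : Fin n, ∑ l : Fin n, B q.1 i l * q.2 i * q.2 l) p‖
        ≤ K * ((b₁ * (ε/2) + b₀) * (ε/2) + b₀ * (ε/2)) := hT 1 (by norm_num) _ hP1
    have h := norm_iteratedFDeriv_mul_le (𝕜 := ℝ) hgPcd hTcd p (n := 1) (by norm_num)
    simp only [Finset.sum_range_succ, Finset.sum_range_zero, zero_add, Nat.choose_zero_right,
      Nat.choose_one_right, Nat.choose_self, Nat.cast_one, Nat.cast_ofNat, one_mul, Nat.sub_zero,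
      Nat.sub_self, Nat.reduceSub] at h
    refine le_trans h ?_
    have e1 : ‖iteratedFDeriv ℝ 0 (fun q : ℝ × (Fin n → ℝ) => g q.2) p‖ *
        ‖iteratedFDeriv ℝ 1 (fun q : ℝ × (Fin n → ℝ) =>
          ∑ i : Fin n, ∑ l : Fin n, B q.1 i l * q.2 i * q.2 l) p‖
        ≤ (1 + 2*Cg) * (K * ((b₁ * (ε/2) + b₀) * (ε/2) + b₀ * (ε/2))) :=
      mul_le_mul (hgP0 p) hT1 (norm_nonneg _) hM0
    have e2 : ‖iteratedFDeriv ℝ 1 (fun q : ℝ × (Fin n → ℝ) => g q.2) p‖ *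
        ‖iteratedFDeriv ℝ 0 (fun q : ℝ × (Fin n → ℝ) =>
          ∑ i : Fin n, ∑ l : Fin n, B q.1 i l * q.2 i * q.2 l) p‖
        ≤ (Cg/ε) * (K * (b₀ * (ε/2) * (ε/2))) :=
      mul_le_mul (hgP1 p) hT0 (norm_nonneg _) hd1nn
    have key : (Cg/ε) * (K * (b₀ * (ε/2) * (ε/2))) = Cg * K * b₀ * ε / 4 := by
      field_simp; ring
    rw [key] at e2
    nlinarith [mul_nonneg (mul_nonneg (mul_nonneg (mul_nonneg hM0 hK0) hb₁0) hε0.le)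
        (sub_nonneg.mpr hε1'),
      mul_nonneg (sub_nonneg.mpr hkey) (mul_nonneg hb₁0 hε0.le),
      mul_nonneg (sub_nonneg.mpr hkey2) hb₀0,
      mul_nonneg (mul_nonneg (mul_nonneg hM0 hK0) hb₀0) (sub_nonneg.mpr hε1'),
      mul_nonneg (mul_nonneg (mul_nonneg hCg.le hK0) hb₀0) (sub_nonneg.mpr hε1'),
      mul_nonneg (mul_nonneg (mul_nonneg hCg.le hK0) hb₀0) hε0.le,
      mul_nonneg (mul_nonneg hCg.le hK0) hb₀0,
      mul_nonneg (mul_nonneg hk₇0.le hb₁0) hε0.le,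
      mul_nonneg (mul_nonneg (mul_nonneg hε0.le hε0.le) hk₇0.le) hb₂0,
      mul_nonneg hk₇0.le hb₀0]
  · -- j = 2
    have hT0 : ‖iteratedFDeriv ℝ 0 (fun q : ℝ × (Fin n → ℝ) =>
        ∑ i : Fin n, ∑ l : Fin n, B q.1 i l * q.2 i * q.2 l) p‖
        ≤ K * (b₀ * (ε/2) * (ε/2)) := hT 0 (by norm_num) _ hP0
    have hT1 : ‖iteratedFDeriv ℝ 1 (fun q : ℝ × (Fin n → ℝ) =>
        ∑ i : Fin n, ∑ l : Fin n, B q.1 i l * q.2 i * q.2 l) p‖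
        ≤ K * ((b₁ * (ε/2) + b₀) * (ε/2) + b₀ * (ε/2)) := hT 1 (by norm_num) _ hP1
    have hT2 : ‖iteratedFDeriv ℝ 2 (fun q : ℝ × (Fin n → ℝ) =>
        ∑ i : Fin n, ∑ l : Fin n, B q.1 i l * q.2 i * q.2 l) p‖
        ≤ K * ((b₂ * (ε/2) + 2*b₁) * (ε/2) + 2 * (b₁ * (ε/2) + b₀)) := hT 2 (by norm_num) _ hP2
    have h := norm_iteratedFDeriv_mul_le (𝕜 := ℝ) hgPcd hTcd p (n := 2) (by norm_num)
    simp only [Finset.sum_range_succ, Finset.sum_range_zero, zero_add, Nat.choose_zero_right,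
      Nat.choose_one_right, Nat.choose_self, Nat.cast_one, Nat.cast_ofNat, one_mul, Nat.sub_zero,
      Nat.sub_self, Nat.reduceSub] at h
    refine le_trans h ?_
    have e0 : ‖iteratedFDeriv ℝ 0 (fun q : ℝ × (Fin n → ℝ) => g q.2) p‖ *
        ‖iteratedFDeriv ℝ 2 (fun q : ℝ × (Fin n → ℝ) =>
          ∑ i : Fin n, ∑ l : Fin n, B q.1 i l * q.2 i * q.2 l) p‖
        ≤ (1 + 2*Cg) * (K * ((b₂ * (ε/2) + 2*b₁) * (ε/2) + 2 * (b₁ * (ε/2) + b₀))) :=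
      mul_le_mul (hgP0 p) hT2 (norm_nonneg _) hM0
    have e1 : ‖iteratedFDeriv ℝ 1 (fun q : ℝ × (Fin n → ℝ) => g q.2) p‖ *
        ‖iteratedFDeriv ℝ 1 (fun q : ℝ × (Fin n → ℝ) =>
          ∑ i : Fin n, ∑ l : Fin n, B q.1 i l * q.2 i * q.2 l) p‖
        ≤ (Cg/ε) * (K * ((b₁ * (ε/2) + b₀) * (ε/2) + b₀ * (ε/2))) :=
      mul_le_mul (hgP1 p) hT1 (norm_nonneg _) hd1nn
    have e2 : ‖iteratedFDeriv ℝ 2 (fun q : ℝ × (Fin n → ℝ) => g q.2) p‖ *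
        ‖iteratedFDeriv ℝ 0 (fun q : ℝ × (Fin n → ℝ) =>
          ∑ i : Fin n, ∑ l : Fin n, B q.1 i l * q.2 i * q.2 l) p‖
        ≤ (Cg/ε^2) * (K * (b₀ * (ε/2) * (ε/2))) :=
      mul_le_mul (hgP2 p) hT0 (norm_nonneg _) hd2nn
    have key1 : (Cg/ε) * (K * ((b₁ * (ε/2) + b₀) * (ε/2) + b₀ * (ε/2)))
        = Cg * K * b₁ * ε / 4 + Cg * K * b₀ := by
      field_simp; ring
    have key2 : (Cg/ε^2) * (K * (b₀ * (ε/2) * (ε/2))) = Cg * K * b₀ / 4 := by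
      field_simp; ring
    rw [key1] at e1
    rw [key2] at e2
    nlinarith [mul_nonneg (sub_nonneg.mpr hkey) (mul_nonneg hb₂0 (mul_nonneg hε0.le hε0.le)),
      mul_nonneg (sub_nonneg.mpr hkey3) (mul_nonneg hb₁0 hε0.le),
      mul_nonneg (sub_nonneg.mpr hkey4) hb₀0,
      mul_nonneg (mul_nonneg (mul_nonneg hCg.le hK0) hb₁0) hε0.le,
      mul_nonneg (mul_nonneg hCg.le hK0) hb₀0,
      mul_nonneg (mul_nonneg hk₇0.le hb₁0) hε0.le,
      mul_nonneg (mul_nonneg (mul_nonneg hε0.le hε0.le) hk₇0.le) hb₂0,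
      mul_nonneg hk₇0.le hb₀0]
end
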